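/- arXiv:math/0606772 — 3 statements merged into one kernel-verified Lean document; each statement's English description precedes it below -/
import Mathlib

section
/- Work in ℝ^n. Let S ⊆ ℝ^n be a finite nonempty set, T ⊆ ℝ^n a finite set, σ = cone(T) the convex cone of all nonnegative real combinations of elements of T, and Δ = conv(S) + σ. Let w be a linear functional with w ≥ 0 on σ, and u a linear functional with u ≥ 0 on σ ∩ ker(w). Write face(Δ,w) for the set of minimizers of w on Δ. Then there exists k₀ ≥ 0 such that for all real k ≥ k₀: the functional u + k·w attains its minimum on Δ, u attains its minimum on face(Δ,w), and min over face(Δ,w) of u equals (min over Δ of (u + k·w)) − k·(min over Δ of w). -/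
open Pointwise

/-- The convex cone of all nonnegative real combinations of the elements of a
finite set `T ⊆ ℝⁿ`. -/
def coneOf {n : ℕ} (T : Finset (Fin n → ℝ)) : Set (Fin n → ℝ) :=
  {x | ∃ c : (Fin n → ℝ) → ℝ, (∀ t, 0 ≤ c t) ∧ x = ∑ t ∈ T, c t • t}

/-- `face f C` is the set of points of `C` at which `f` attains its minimum over `C`. -/
def face {V : Type*} (f : V → ℝ) (C : Set V) : Set V :=
  {x ∈ C | ∀ y ∈ C, f x ≤ f y}

lemma zero_mem_coneOf {n : ℕ} (T : Finset (Fin n → ℝ)) : (0 : Fin n → ℝ) ∈ coneOf T :=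
  ⟨0, fun _ => le_refl 0, by simp⟩

lemma self_mem_coneOf {n : ℕ} {T : Finset (Fin n → ℝ)} {t : Fin n → ℝ} (ht : t ∈ T) :
    t ∈ coneOf T := by
  classical
  refine ⟨fun x => if x = t then 1 else 0, fun x => by positivity, ?_⟩
  rw [Finset.sum_congr rfl (fun x _ => show (if x = t then (1:ℝ) else 0) • x
      = if x = t then x else 0 by split_ifs <;> simp)]
  simp [Finset.sum_ite_eq' T t id, ht]

lemma isLeast_linear_image {n : ℕ} (S T : Finset (Fin n → ℝ)) (hS : S.Nonempty)
    (f : (Fin n → ℝ) →ₗ[ℝ] ℝ) (hf : ∀ t ∈ T, 0 ≤ f t) :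
    IsLeast (f '' (convexHull ℝ (S : Set (Fin n → ℝ)) + coneOf T)) (S.inf' hS f) := by
  constructor
  · obtain ⟨s, hs, hval⟩ := S.exists_mem_eq_inf' hS f
    refine ⟨s, ?_, hval.symm⟩
    have := Set.add_mem_add (subset_convexHull ℝ (S : Set (Fin n → ℝ)) hs)
      (zero_mem_coneOf T)
    simpa using this
  · rintro y ⟨x, hx, rfl⟩
    obtain ⟨p, hp, q, hq, rfl⟩ := Set.mem_add.1 hx
    have hfq : 0 ≤ f q := by
      obtain ⟨c, hc, rfl⟩ := hq
      rw [map_sum]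
      exact Finset.sum_nonneg fun t ht => by
        rw [map_smul, smul_eq_mul]; exact mul_nonneg (hc t) (hf t ht)
    have hfp : S.inf' hS f ≤ f p := by
      have hsub : convexHull ℝ (S : Set (Fin n → ℝ)) ⊆ {x | S.inf' hS f ≤ f x} :=
        convexHull_min (fun s hs => Finset.inf'_le f hs) (convex_halfSpace_ge f.isLinear _)
      exact hsub hp
    rw [map_add]
    linarith

/-- For `Δ = conv(S) + cone(T)`, `w ≥ 0` on the cone and `u ≥ 0` on
`σ ∩ ker w`, there is `k₀ ≥ 0` such that for all `k ≥ k₀` the functional `u + k·w`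
attains its minimum on `Δ`, `u` attains its minimum on `face(Δ,w)`, `w` attains its
minimum on `Δ`, and `min_{face(Δ,w)} u = min_Δ (u + k·w) − k · min_Δ w`. -/
theorem min_on_face_eq_shifted_min
    {n : ℕ} (S T : Finset (Fin n → ℝ)) (hS : S.Nonempty)
    (w u : (Fin n → ℝ) →ₗ[ℝ] ℝ)
    (hw : ∀ x ∈ coneOf T, 0 ≤ w x)
    (hu : ∀ x ∈ coneOf T ∩ {x | w x = 0}, 0 ≤ u x) :
    ∃ k₀ : ℝ, 0 ≤ k₀ ∧ ∀ k : ℝ, k₀ ≤ k →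
      ∃ m₁ m₂ m₃ : ℝ,
        IsLeast ((fun x => u x + k * w x) ''
          (convexHull ℝ (S : Set (Fin n → ℝ)) + coneOf T)) m₁ ∧
        IsLeast (u '' face w (convexHull ℝ (S : Set (Fin n → ℝ)) + coneOf T)) m₂ ∧
        IsLeast (w '' (convexHull ℝ (S : Set (Fin n → ℝ)) + coneOf T)) m₃ ∧
        m₂ = m₁ - k * m₃ := by
  classical
  set Δ := convexHull ℝ (S : Set (Fin n → ℝ)) + coneOf T with hΔdef
  have hwT : ∀ t ∈ T, 0 ≤ w t := fun t ht => hw t (self_mem_coneOf ht)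
  set m₃ := S.inf' hS w with hm₃def
  have h₃ : IsLeast (w '' Δ) m₃ := isLeast_linear_image S T hS w hwT
  obtain ⟨s₃, hs₃, hs₃val⟩ := S.exists_mem_eq_inf' hS w
  set Sw := S.filter (fun s => w s = m₃) with hSwdef
  have hSw : Sw.Nonempty := ⟨s₃, Finset.mem_filter.2 ⟨hs₃, hs₃val.symm⟩⟩
  set m₂ := Sw.inf' hSw u with hm₂def
  obtain ⟨s₂, hs₂, hs₂val⟩ := Sw.exists_mem_eq_inf' hSw u
  have hs₂S : s₂ ∈ S := (Finset.mem_filter.1 hs₂).1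
  have hws₂ : w s₂ = m₃ := (Finset.mem_filter.1 hs₂).2
  -- point membership helpers
  have hmemΔ : ∀ s ∈ S, s ∈ Δ := by
    intro s hs
    have := Set.add_mem_add (subset_convexHull ℝ (S : Set (Fin n → ℝ)) hs)
      (zero_mem_coneOf T)
    simpa using this
  set g : (Fin n → ℝ) → ℝ := fun t => max 0 (-(u t) / w t) with hgdef
  set h : (Fin n → ℝ) → ℝ := fun s => max 0 ((m₂ - u s) / (w s - m₃)) with hhdef
  set K : Finset ℝ := insert (0:ℝ) (T.image g ∪ S.image h) with hKdef
  have hKne : K.Nonempty := ⟨0, Finset.mem_insert_self _ _⟩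
  set k₀ := K.max' hKne with hk₀def
  have hk₀0 : 0 ≤ k₀ := Finset.le_max' K 0 (Finset.mem_insert_self _ _)
  refine ⟨k₀, hk₀0, fun k hk => ?_⟩
  have hk0 : 0 ≤ k := hk₀0.trans hk
  -- nonnegativity of u + k•w on the generators
  have hT : ∀ t ∈ T, 0 ≤ u t + k * w t := by
    intro t ht
    rcases eq_or_lt_of_le (hwT t ht) with h0 | hpos
    · have hut : 0 ≤ u t := hu t ⟨self_mem_coneOf ht, by simp [← h0]⟩
      nlinarith
    · have hgk : g t ≤ k :=
        le_trans (Finset.le_max' K (g t) (Finset.mem_insert_of_mem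
          (Finset.mem_union_left _ (Finset.mem_image_of_mem g ht)))) hk
      have hdiv : -(u t) / w t ≤ k := le_trans (le_max_right _ _) hgk
      have := (div_le_iff₀ hpos).1 hdiv
      linarith
  -- lower bound over S
  have hSlb : ∀ s ∈ S, m₂ + k * m₃ ≤ u s + k * w s := by
    intro s hs
    have hm₃le : m₃ ≤ w s := Finset.inf'_le w hs
    rcases eq_or_lt_of_le hm₃le with h0 | hlt
    · have : m₂ ≤ u s := Finset.inf'_le u (Finset.mem_filter.2 ⟨hs, h0.symm⟩)
      nlinarith
    · have hhk : h s ≤ k :=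
        le_trans (Finset.le_max' K (h s) (Finset.mem_insert_of_mem
          (Finset.mem_union_right _ (Finset.mem_image_of_mem h hs)))) hk
      have hdiv : (m₂ - u s) / (w s - m₃) ≤ k := le_trans (le_max_right _ _) hhk
      have := (div_le_iff₀ (by linarith)).1 hdiv
      nlinarith
  -- IsLeast of u + k•w on Δ
  have hfk : IsLeast ((u + k • w) '' Δ) (S.inf' hS (u + k • w)) :=
    isLeast_linear_image S T hS (u + k • w) (by
      intro t ht
      simpa [smul_eq_mul] using hT t ht)
  have hfun : (fun x => u x + k * w x) = ⇑(u + k • w) := by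
    funext x; simp [smul_eq_mul]
  have hinf : S.inf' hS (u + k • w) = m₂ + k * m₃ := by
    apply le_antisymm
    · have := Finset.inf'_le (f := ⇑(u + k • w)) hs₂S
      simp only [LinearMap.add_apply, LinearMap.smul_apply, smul_eq_mul] at this
      rw [hws₂, hs₂val.symm] at this
      exact this
    · apply Finset.le_inf'
      intro s hs
      simpa [smul_eq_mul] using hSlb s hs
  have hm₁ : IsLeast ((fun x => u x + k * w x) '' Δ) (m₂ + k * m₃) := by
    rw [hfun, ← hinf]; exact hfk
  -- s₂ is in the face
  have hs₂Δ : s₂ ∈ Δ := hmemΔ s₂ hs₂S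
  have hs₂face : s₂ ∈ face w Δ := by
    refine ⟨hs₂Δ, fun y hy => ?_⟩
    rw [hws₂]
    exact h₃.2 ⟨y, hy, rfl⟩
  have hm₂ : IsLeast (u '' face w Δ) m₂ := by
    constructor
    · exact ⟨s₂, hs₂face, hs₂val.symm⟩
    · rintro y ⟨x, ⟨hxΔ, hxmin⟩, rfl⟩
      have hwx : w x = m₃ := le_antisymm (by simpa [hws₂] using hxmin s₂ hs₂Δ)
        (h₃.2 ⟨x, hxΔ, rfl⟩)
      have := hm₁.2 ⟨x, hxΔ, rfl⟩
      simp only [hwx] at this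
      linarith
  exact ⟨m₂ + k * m₃, m₂, m₃, hm₁, hm₂, h₃, by ring⟩
end

section
/- Let V be a real vector space, let A, B, C ⊆ V be subsets, let u, u' : V → ℝ be linear functionals, and let c, c' ∈ ℝ. Assume: u(a) ≤ c for all a ∈ A, u(z) ≥ c for all z ∈ C, and A ∩ {x : u(x) = c} = C ∩ {x : u(x) = c}; similarly u'(b) ≤ c' for all b ∈ B, u'(z) ≥ c' for all z ∈ C, and B ∩ {x : u'(x) = c'} = C ∩ {x : u'(x) = c'}. Then: (u+u')(x) ≤ c + c' for all x ∈ A ∩ B, (u+u')(z) ≥ c + c' for all z ∈ C, and (A ∩ B) ∩ {x : (u+u')(x) = c + c'} = C ∩ {x : (u+u')(x) = c + c'}. -/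
/-- Coherent separation survives under intersection: if `u` separates
`A` from `C` at level `c` (with common face in the hyperplane), and `u'` separates
`B` from `C` at level `c'`, then `u + u'` separates `A ∩ B` from `C` at level
`c + c'`, with common face in the hyperplane. -/
theorem coherence_intersection
    {V : Type*} [AddCommGroup V] [Module ℝ V]
    (A B C : Set V) (u u' : V →ₗ[ℝ] ℝ) (c c' : ℝ)
    (hAu : ∀ a ∈ A, u a ≤ c) (hCu : ∀ z ∈ C, c ≤ u z)
    (hACu : A ∩ {x | u x = c} = C ∩ {x | u x = c})
    (hBu' : ∀ b ∈ B, u' b ≤ c') (hCu' : ∀ z ∈ C, c' ≤ u' z)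
    (hBCu' : B ∩ {x | u' x = c'} = C ∩ {x | u' x = c'}) :
    (∀ x ∈ A ∩ B, u x + u' x ≤ c + c') ∧
    (∀ z ∈ C, c + c' ≤ u z + u' z) ∧
    (A ∩ B) ∩ {x | u x + u' x = c + c'} = C ∩ {x | u x + u' x = c + c'} := by
  refine ⟨fun x hx => add_le_add (hAu x hx.1) (hBu' x hx.2),
    fun z hz => add_le_add (hCu z hz) (hCu' z hz), ?_⟩
  ext x
  constructor
  · rintro ⟨⟨hA, hB⟩, hsum⟩
    have h1 : u x = c := by
      have := hBu' x hB; have := hAu x hA; simp only [Set.mem_setOf_eq] at hsum; linarith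
    have h2 : u' x = c' := by
      have := hAu x hA; simp only [Set.mem_setOf_eq] at hsum; linarith
    have hC : x ∈ C := (hACu ▸ Set.mem_inter hA h1 : x ∈ C ∩ _).1
    exact ⟨hC, hsum⟩
  · rintro ⟨hC, hsum⟩
    have h1 : u x = c := by
      have := hCu x hC; have := hCu' x hC; simp only [Set.mem_setOf_eq] at hsum; linarith
    have h2 : u' x = c' := by
      have := hCu x hC; simp only [Set.mem_setOf_eq] at hsum; linarith
    have hA : x ∈ A := (hACu.symm ▸ Set.mem_inter hC h1 : x ∈ A ∩ _).1
    have hB : x ∈ B := (hBCu'.symm ▸ Set.mem_inter hC h2 : x ∈ B ∩ _).1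
    exact ⟨⟨hA, hB⟩, hsum⟩
end

section
/- Let K be a field equipped with an additive valuation ν : K → WithTop ℚ (so ν(x·y) = ν(x) + ν(y), ν(x + y) ≥ min(ν(x), ν(y)), ν(0) = ⊤, ν(1) = 0, and ν(x) ≠ ⊤ for x ≠ 0). Let M = ℤ^n and let φ : M → ℚ be an additive group homomorphism. Consider the group algebra K[M] (the algebra of finitely supported functions f : M → K with convolution product), and define w : K[M] → WithTop ℚ by w(0) = ⊤ and, for f ≠ 0, w(f) = min over u in the support of f of (ν(f(u)) + φ(u)). Then w is an additive valuation on K[M]: w(f·g) = w(f) + w(g) and w(f + g) ≥ min(w(f), w(g)) for all f, g ∈ K[M], with w(1) = 0 and w(0) = ⊤. -/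
/-! The only nontrivial inequality is `w (f * g) ≤ w f + w g`. Let `A` and `B` be the sets of
exponents at which the minima defining `w f` and `w g` are attained. As `ℤⁿ` has unique sums,
some `a₀ + b₀` with `a₀ ∈ A`, `b₀ ∈ B` arises from exactly one pair in `A × B`. Every other term
`f a * g b` with `a + b = a₀ + b₀` then has strictly larger valuation, so the coefficient of
`f * g` at `a₀ + b₀` has valuation exactly `ν (f a₀) + ν (g b₀)`. -/

open AddMonoidAlgebra

namespace AddValuation

variable {R Γ₀ : Type*} [Ring R] [LinearOrderedAddCommMonoidWithTop Γ₀] (v : AddValuation R Γ₀)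

theorem le_map_sum_add {ι : Type*} {s : Finset ι} {f : ι → R} {c d : Γ₀}
    (hf : ∀ i ∈ s, c ≤ v (f i) + d) : c ≤ v (∑ i ∈ s, f i) + d := by
  induction s using Finset.cons_induction with
  | empty => simp
  | cons i s hi ih =>
    rw [Finset.sum_cons]
    calc c ≤ min (v (f i)) (v (∑ j ∈ s, f j)) + d := by
          rw [← min_add_add_right]
          exact le_min (hf i (s.mem_cons_self i)) (ih fun j hj => hf j (Finset.mem_cons_of_mem hj))
      _ ≤ v (f i + ∑ j ∈ s, f j) + d := add_le_add_left (v.map_add _ _) d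

theorem map_sum_eq_of_lt {ι : Type*} [DecidableEq ι] {s : Finset ι} {f : ι → R} {j : ι}
    (hj : j ∈ s) (hf : ∀ i ∈ s.erase j, v (f j) < v (f i)) : v (∑ i ∈ s, f i) = v (f j) := by
  rw [← Finset.add_sum_erase s f hj]
  rcases eq_or_ne (v (f j)) ⊤ with htop | htop
  · rw [Finset.eq_empty_of_forall_notMem (s := s.erase j) fun i hi => not_top_lt (htop ▸ hf i hi),
      Finset.sum_empty, add_zero]
  · exact v.map_add_eq_of_lt_left (v.map_lt_sum htop hf)

end AddValuation

namespace AddMonoidAlgebra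

variable {R M Γ : Type*} [Ring R] [AddMonoid M]
  [AddCommGroup Γ] [LinearOrder Γ] [IsOrderedAddMonoid Γ]

theorem coeff_mul_eq_sum_product [DecidableEq M] (f g : R[M]) (m : M) :
    (f * g).coeff m = ∑ p ∈ f.coeff.support ×ˢ g.coeff.support,
      if p.1 + p.2 = m then f.coeff p.1 * g.coeff p.2 else 0 := by
  rw [coeff_mul, Finset.sum_product]
  rfl

variable (v : AddValuation R (WithTop Γ)) (φ : M →+ Γ)

def monomialVal (f : R[M]) : WithTop Γ :=
  f.coeff.support.inf fun m => v (f.coeff m) + φ m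

open scoped Classical in
noncomputable def initialSupport (f : R[M]) : Finset M :=
  {m ∈ f.coeff.support | v (f.coeff m) + φ m = monomialVal v φ f}

variable {v φ} {f g : R[M]}

theorem monomialVal_le (f : R[M]) (m : M) : monomialVal v φ f ≤ v (f.coeff m) + φ m := by
  by_cases hm : f.coeff m = 0
  · simp [hm]
  · exact Finset.inf_le (Finsupp.mem_support_iff.2 hm)

theorem le_monomialVal_iff {c : WithTop Γ} :
    c ≤ monomialVal v φ f ↔ ∀ m, c ≤ v (f.coeff m) + φ m :=
  ⟨fun h m => h.trans (monomialVal_le f m), fun h => Finset.le_inf fun m _ => h m⟩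

@[simp]
theorem monomialVal_zero : monomialVal v φ (0 : R[M]) = ⊤ := rfl

theorem monomialVal_single (m : M) (r : R) : monomialVal v φ (single m r) = v r + φ m := by
  rcases eq_or_ne r 0 with rfl | hr
  · simp
  · simp [monomialVal, coeff_single, Finsupp.support_single m hr]

theorem monomialVal_one : monomialVal v φ (1 : R[M]) = 0 := by
  rw [one_def, monomialVal_single, v.map_one, map_zero, WithTop.coe_zero, add_zero]

theorem min_monomialVal_le_add (f g : R[M]) :
    min (monomialVal v φ f) (monomialVal v φ g) ≤ monomialVal v φ (f + g) :=
  le_monomialVal_iff.2 fun m => calc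
    min (monomialVal v φ f) (monomialVal v φ g)
        ≤ min (v (f.coeff m) + φ m) (v (g.coeff m) + φ m) :=
      min_le_min (monomialVal_le f m) (monomialVal_le g m)
    _ = min (v (f.coeff m)) (v (g.coeff m)) + φ m := min_add_add_right _ _ _
    _ ≤ v ((f + g).coeff m) + φ m := add_le_add_left (v.map_add _ _) _

theorem valuation_mul_add_map_add (x y : R) (a b : M) :
    v (x * y) + φ (a + b) = (v x + φ a) + (v y + φ b) := by
  rw [v.map_mul, map_add, WithTop.coe_add, add_add_add_comm]

theorem add_monomialVal_le_mul (f g : R[M]) :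
    monomialVal v φ f + monomialVal v φ g ≤ monomialVal v φ (f * g) := by
  classical
  refine le_monomialVal_iff.2 fun m => ?_
  rw [coeff_mul_eq_sum_product]
  refine v.le_map_sum_add fun p _ => ?_
  split_ifs with hp
  · rw [← hp, valuation_mul_add_map_add]
    exact add_le_add (monomialVal_le f p.1) (monomialVal_le g p.2)
  · simp

theorem mem_initialSupport {m : M} :
    m ∈ initialSupport v φ f ↔ f.coeff m ≠ 0 ∧ v (f.coeff m) + φ m = monomialVal v φ f := by
  classical
  simp [initialSupport]

theorem initialSupport_nonempty (hf : f ≠ 0) : (initialSupport v φ f).Nonempty := by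
  obtain ⟨m, hm, hmin⟩ := Finset.exists_mem_eq_inf f.coeff.support
    (Finsupp.support_nonempty_iff.2 (by simpa using hf)) fun m => v (f.coeff m) + φ m
  exact ⟨m, mem_initialSupport.2 ⟨Finsupp.mem_support_iff.1 hm, hmin.symm⟩⟩

theorem monomialVal_lt_of_notMem_initialSupport {m : M} (hm : f.coeff m ≠ 0)
    (h : m ∉ initialSupport v φ f) : monomialVal v φ f < v (f.coeff m) + φ m :=
  (monomialVal_le f m).lt_of_ne fun heq => h (mem_initialSupport.2 ⟨hm, heq.symm⟩)

theorem valuation_mul_lt_of_uniqueAdd {a₀ b₀ a b : M}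
    (ha₀ : a₀ ∈ initialSupport v φ f) (hb₀ : b₀ ∈ initialSupport v φ g)
    (huniq : UniqueAdd (initialSupport v φ f) (initialSupport v φ g) a₀ b₀)
    (hfin : v (f.coeff a₀ * g.coeff b₀) ≠ ⊤) (ha : f.coeff a ≠ 0) (hb : g.coeff b ≠ 0)
    (hab : a + b = a₀ + b₀) (hne : (a, b) ≠ (a₀, b₀)) :
    v (f.coeff a₀ * g.coeff b₀) < v (f.coeff a * g.coeff b) := by
  rw [← WithTop.add_lt_add_iff_right (WithTop.coe_ne_top (a := φ (a₀ + b₀))),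
    valuation_mul_add_map_add, ← hab, valuation_mul_add_map_add, (mem_initialSupport.1 ha₀).2,
    (mem_initialSupport.1 hb₀).2]
  have hfin' : monomialVal v φ f + monomialVal v φ g ≠ ⊤ := by
    rwa [← (mem_initialSupport.1 ha₀).2, ← (mem_initialSupport.1 hb₀).2,
      ← valuation_mul_add_map_add, WithTop.add_ne_top, and_iff_left WithTop.coe_ne_top]
  obtain ⟨hf_fin, hg_fin⟩ := WithTop.add_ne_top.1 hfin'
  by_cases ha' : a ∈ initialSupport v φ f
  · have hb' : b ∉ initialSupport v φ g := fun hb' => hne (Prod.ext_iff.2 (huniq ha' hb' hab))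
    exact WithTop.add_lt_add_of_le_of_lt hf_fin (monomialVal_le f a)
      (monomialVal_lt_of_notMem_initialSupport hb hb')
  · exact WithTop.add_lt_add_of_lt_of_le hg_fin
      (monomialVal_lt_of_notMem_initialSupport ha ha') (monomialVal_le g b)

theorem valuation_coeff_mul_of_uniqueAdd {a₀ b₀ : M}
    (ha₀ : a₀ ∈ initialSupport v φ f) (hb₀ : b₀ ∈ initialSupport v φ g)
    (huniq : UniqueAdd (initialSupport v φ f) (initialSupport v φ g) a₀ b₀)
    (hfin : v (f.coeff a₀ * g.coeff b₀) ≠ ⊤) :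
    v ((f * g).coeff (a₀ + b₀)) = v (f.coeff a₀ * g.coeff b₀) := by
  classical
  rw [coeff_mul_eq_sum_product]
  refine (v.map_sum_eq_of_lt (j := (a₀, b₀)) ?_ fun p hp => ?_).trans (by rw [if_pos rfl])
  · exact Finset.mem_product.2 ⟨Finsupp.mem_support_iff.2 (mem_initialSupport.1 ha₀).1,
      Finsupp.mem_support_iff.2 (mem_initialSupport.1 hb₀).1⟩
  obtain ⟨hne, hp⟩ := Finset.mem_erase.1 hp
  obtain ⟨ha, hb⟩ := Finset.mem_product.1 hp
  rw [if_pos rfl]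
  split_ifs with hab
  · exact valuation_mul_lt_of_uniqueAdd ha₀ hb₀ huniq hfin (Finsupp.mem_support_iff.1 ha)
      (Finsupp.mem_support_iff.1 hb) hab hne
  · rw [v.map_zero]
    exact hfin.lt_top

theorem monomialVal_mul_le [UniqueSums M] (f g : R[M]) :
    monomialVal v φ (f * g) ≤ monomialVal v φ f + monomialVal v φ g := by
  rcases eq_or_ne f 0 with rfl | hf
  · simp
  rcases eq_or_ne g 0 with rfl | hg
  · simp
  obtain ⟨a₀, ha₀, b₀, hb₀, huniq⟩ := UniqueSums.uniqueAdd_of_nonempty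
    (initialSupport_nonempty (v := v) (φ := φ) hf)
    (initialSupport_nonempty (v := v) (φ := φ) hg)
  rw [← (mem_initialSupport.1 ha₀).2, ← (mem_initialSupport.1 hb₀).2, ← valuation_mul_add_map_add]
  refine (monomialVal_le _ _).trans (add_le_add_left ?_ _)
  rcases eq_or_ne (v (f.coeff a₀ * g.coeff b₀)) ⊤ with htop | htop
  · exact htop ▸ le_top
  · exact (valuation_coeff_mul_of_uniqueAdd ha₀ hb₀ huniq htop).le

theorem monomialVal_mul [UniqueSums M] (f g : R[M]) :
    monomialVal v φ (f * g) = monomialVal v φ f + monomialVal v φ g :=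
  (monomialVal_mul_le f g).antisymm (add_monomialVal_le_mul f g)

variable (v φ) in
noncomputable def monomialValuation [UniqueSums M] : AddValuation R[M] (WithTop Γ) :=
  AddValuation.of (monomialVal v φ) monomialVal_zero monomialVal_one min_monomialVal_le_add
    monomialVal_mul

end AddMonoidAlgebra

theorem valuation_on_group_algebra_general
    {K : Type*} [Field K] {n : ℕ}
    (ν : K → WithTop ℚ)
    (hν_mul : ∀ x y : K, ν (x * y) = ν x + ν y)
    (hν_add : ∀ x y : K, min (ν x) (ν y) ≤ ν (x + y))
    (hν0 : ν 0 = ⊤) (hν1 : ν 1 = 0)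
    (φ : (Fin n → ℤ) →+ ℚ)
    (w : AddMonoidAlgebra K (Fin n → ℤ) → WithTop ℚ)
    (hw0 : w 0 = ⊤)
    (hw : ∀ f : AddMonoidAlgebra K (Fin n → ℤ), ∀ hf : f ≠ 0,
      w f = f.coeff.support.inf'
        (Finsupp.support_nonempty_iff.mpr (fun h => hf (AddMonoidAlgebra.coeff_injective h)))
        (fun m => ν (f.coeff m) + (φ m : WithTop ℚ))) :
    (∀ f g : AddMonoidAlgebra K (Fin n → ℤ), w (f * g) = w f + w g) ∧
    (∀ f g : AddMonoidAlgebra K (Fin n → ℤ), min (w f) (w g) ≤ w (f + g)) ∧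
    w 1 = 0 := by
  let v : AddValuation K (WithTop ℚ) := .of ν hν0 hν1 hν_add hν_mul
  obtain rfl : w = monomialValuation v φ := by
    funext f
    rcases eq_or_ne f 0 with rfl | hf
    · rw [hw0, AddValuation.map_zero]
    · rw [hw f hf, Finset.inf'_eq_inf]
      rfl
  exact ⟨AddValuation.map_mul _, AddValuation.map_add _, AddValuation.map_one _⟩

/-- Given an additive valuation `ν` on a field `K` and an additive
homomorphism `φ : ℤⁿ → ℚ`, the map `w` on the group algebra `K[ℤⁿ]` defined by
`w 0 = ⊤` and `w f = min over the support of f of (ν (f u) + φ u)` is again an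
additive valuation: it is multiplicative, satisfies the ultrametric inequality,
and sends `1` to `0`. -/
theorem valuation_on_group_algebra
    {K : Type*} [Field K] {n : ℕ}
    (ν : K → WithTop ℚ)
    (hν_mul : ∀ x y : K, ν (x * y) = ν x + ν y)
    (hν_add : ∀ x y : K, min (ν x) (ν y) ≤ ν (x + y))
    (hν0 : ν 0 = ⊤) (hν1 : ν 1 = 0)
    (hν_ne : ∀ x : K, x ≠ 0 → ν x ≠ ⊤)
    (φ : (Fin n → ℤ) →+ ℚ)
    (w : AddMonoidAlgebra K (Fin n → ℤ) → WithTop ℚ)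
    (hw0 : w 0 = ⊤)
    (hw : ∀ f : AddMonoidAlgebra K (Fin n → ℤ), ∀ hf : f ≠ 0,
      w f = f.coeff.support.inf'
        (Finsupp.support_nonempty_iff.mpr (fun h => hf (AddMonoidAlgebra.coeff_injective h)))
        (fun m => ν (f.coeff m) + (φ m : WithTop ℚ))) :
    (∀ f g : AddMonoidAlgebra K (Fin n → ℤ), w (f * g) = w f + w g) ∧
    (∀ f g : AddMonoidAlgebra K (Fin n → ℤ), min (w f) (w g) ≤ w (f + g)) ∧
    w 1 = 0 :=
  valuation_on_group_algebra_general ν hν_mul hν_add hν0 hν1 φ w hw0 hw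
end
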